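/- Canonical forms are unique up to equivalence: if G = H and both G and H have no dominated and no reversible options (are in canonical form), then G ≡ H (identical underlying game trees with the same scores on all termination vertices). -/

import Mathlib

inductive SGame : Type where
  | mk (left right : List SGame) (score : ℝ)

namespace SGame

def leftOpts : SGame → List SGame | mk L _ _ => L
def rightOpts : SGame → List SGame | mk _ R _ => R
def score : SGame → ℝ | mk _ _ s => s

mutual
  /-- Optimal final score when Left moves first. -/
  def leftScore : SGame → ℝ
    | mk [] _ s => s
    | mk (g :: L) _ _ => maxRight g L
  termination_by G => sizeOf G
  decreasing_by all_goals (simp; try omega)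
  def maxRight : SGame → List SGame → ℝ
    | g, [] => rightScore g
    | g, h :: t => max (rightScore g) (maxRight h t)
  termination_by g l => 1 + sizeOf g + sizeOf l
  decreasing_by all_goals (simp; try omega)
  /-- Optimal final score when Right moves first. -/
  def rightScore : SGame → ℝ
    | mk _ [] s => s
    | mk _ (g :: R) _ => minLeft g R
  termination_by G => sizeOf G
  decreasing_by all_goals (simp; try omega)
  def minLeft : SGame → List SGame → ℝ
    | g, [] => leftScore g
    | g, h :: t => min (leftScore g) (minLeft h t)
  termination_by g l => 1 + sizeOf g + sizeOf l
  decreasing_by all_goals (simp; try omega)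
end

/-- Long-rule disjunctive sum. -/
def sum : SGame → SGame → SGame
  | mk L1 R1 s1, mk L2 R2 s2 =>
    mk ((L1.attach.map fun g => sum g.1 (mk L2 R2 s2)) ++
        (L2.attach.map fun h => sum (mk L1 R1 s1) h.1))
       ((R1.attach.map fun g => sum g.1 (mk L2 R2 s2)) ++
        (R2.attach.map fun h => sum (mk L1 R1 s1) h.1))
       (s1 + s2)
termination_by G H => sizeOf G + sizeOf H
decreasing_by
  all_goals simp
  · have := List.sizeOf_lt_of_mem g.2; omega
  · have := List.sizeOf_lt_of_mem h.2; omega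
  · have := List.sizeOf_lt_of_mem g.2; omega
  · have := List.sizeOf_lt_of_mem h.2; omega

end SGame

namespace SGame

/-- The game `{.|0|.}`. -/
def zero : SGame := mk [] [] 0

/-- Negation: `-G = {-G^R | -G^S | -G^L}`. -/
def neg : SGame → SGame
  | mk L R s =>
    mk (R.attach.map fun g => neg g.1) (L.attach.map fun g => neg g.1) (-s)
termination_by G => sizeOf G
decreasing_by
  all_goals (have := List.sizeOf_lt_of_mem g.2; simp; omega)

/-- Identity of game trees (options regarded as sets). -/
def Ident : SGame → SGame → Prop
  | mk L1 R1 s1, mk L2 R2 s2 =>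
    s1 = s2 ∧
    (∀ g ∈ L1.attach, ∃ h ∈ L2.attach, Ident g.1 h.1) ∧
    (∀ h ∈ L2.attach, ∃ g ∈ L1.attach, Ident g.1 h.1) ∧
    (∀ g ∈ R1.attach, ∃ h ∈ R2.attach, Ident g.1 h.1) ∧
    (∀ h ∈ R2.attach, ∃ g ∈ R1.attach, Ident g.1 h.1)
termination_by G H => sizeOf G + sizeOf H
decreasing_by
  all_goals
    (have := List.sizeOf_lt_of_mem g.2; have := List.sizeOf_lt_of_mem h.2
     simp; omega)

inductive Outcome : Type where
  | L | R | N | P | T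
deriving DecidableEq

/-- The outcome class of a game, determined by the signs of its final scores. -/
noncomputable def outcome (G : SGame) : Outcome :=
  if 0 < G.leftScore then
    (if 0 < G.rightScore then .L else if G.rightScore = 0 then .L else .N)
  else if G.leftScore = 0 then
    (if 0 < G.rightScore then .L else if G.rightScore = 0 then .T else .R)
  else
    (if 0 < G.rightScore then .P else .R)

/-- `G ≥ H`. -/
def Ge (G H : SGame) : Prop :=
  ∀ X : SGame,
    (0 ≤ (H.sum X).leftScore → 0 ≤ (G.sum X).leftScore) ∧
    (0 ≤ (H.sum X).rightScore → 0 ≤ (G.sum X).rightScore) ∧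
    (0 < (H.sum X).leftScore → 0 < (G.sum X).leftScore) ∧
    (0 < (H.sum X).rightScore → 0 < (G.sum X).rightScore)

/-- `G ≤ H`. -/
def Le (G H : SGame) : Prop :=
  ∀ X : SGame,
    ((H.sum X).leftScore ≤ 0 → (G.sum X).leftScore ≤ 0) ∧
    ((H.sum X).rightScore ≤ 0 → (G.sum X).rightScore ≤ 0) ∧
    ((H.sum X).leftScore < 0 → (G.sum X).leftScore < 0) ∧
    ((H.sum X).rightScore < 0 → (G.sum X).rightScore < 0)

/-- Game equality: same outcome in every disjunctive-sum context. -/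
def gameEq (G H : SGame) : Prop :=
  ∀ X : SGame, (G.sum X).outcome = (H.sum X).outcome

end SGame

namespace SGame

/-- Every score in the game tree of `G` satisfies `p`. -/
def AllScores (p : ℝ → Prop) : SGame → Prop
  | mk L R s =>
    p s ∧ (∀ g ∈ L.attach, AllScores p g.1) ∧ (∀ g ∈ R.attach, AllScores p g.1)
termination_by G => sizeOf G
decreasing_by all_goals (have := List.sizeOf_lt_of_mem g.2; simp; omega)

/-- `G ≡ H`: identical underlying game trees, with equal scores at all
termination vertices (vertices at which at least one player has no option,
i.e. where the play of some disjunctive sum can end). -/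
def Equiv : SGame → SGame → Prop
  | mk L1 R1 s1, mk L2 R2 s2 =>
    ((L1 = [] ∨ R1 = []) → s1 = s2) ∧
    (∀ g ∈ L1.attach, ∃ h ∈ L2.attach, Equiv g.1 h.1) ∧
    (∀ h ∈ L2.attach, ∃ g ∈ L1.attach, Equiv g.1 h.1) ∧
    (∀ g ∈ R1.attach, ∃ h ∈ R2.attach, Equiv g.1 h.1) ∧
    (∀ h ∈ R2.attach, ∃ g ∈ R1.attach, Equiv g.1 h.1)
termination_by G H => sizeOf G + sizeOf H
decreasing_by
  all_goals
    (have := List.sizeOf_lt_of_mem g.2; have := List.sizeOf_lt_of_mem h.2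
     simp; omega)

/-- `G` is in canonical form: hereditarily, no dominated and no reversible options. -/
def Canonical : SGame → Prop
  | mk L R s =>
    (∀ A ∈ L, ∀ B ∈ L, A ≠ B → ¬ Ge A B) ∧
    (∀ D ∈ R, ∀ E ∈ R, D ≠ E → ¬ Le D E) ∧
    (∀ A ∈ L, ∀ Ar ∈ A.rightOpts, ¬ Le Ar (mk L R s)) ∧
    (∀ D ∈ R, ∀ Dl ∈ D.leftOpts, ¬ Ge Dl (mk L R s)) ∧
    (∀ g ∈ L.attach, Canonical g.1) ∧ (∀ g ∈ R.attach, Canonical g.1)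
termination_by G => sizeOf G
decreasing_by all_goals (have := List.sizeOf_lt_of_mem g.2; simp; omega)

/-- One reduction step: removing a dominated option or bypassing a reversible
option, at the root or in some subposition. -/
inductive Step : SGame → SGame → Prop where
  | domL {L1 L2 : List SGame} {R : List SGame} {s : ℝ} {B : SGame} (A : SGame)
      (hA : A ∈ L1 ++ L2) (h : Ge A B) :
      Step (mk (L1 ++ B :: L2) R s) (mk (L1 ++ L2) R s)
  | domR {R1 R2 : List SGame} {L : List SGame} {s : ℝ} {E : SGame} (D : SGame)
      (hD : D ∈ R1 ++ R2) (h : Le D E) :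
      Step (mk L (R1 ++ E :: R2) s) (mk L (R1 ++ R2) s)
  | revL {L1 L2 : List SGame} {R : List SGame} {s : ℝ} {A Ar : SGame}
      (hAr : Ar ∈ A.rightOpts) (h : Le Ar (mk (L1 ++ A :: L2) R s)) :
      Step (mk (L1 ++ A :: L2) R s) (mk (L1 ++ Ar.leftOpts ++ L2) R s)
  | revR {R1 R2 : List SGame} {L : List SGame} {s : ℝ} {D Dl : SGame}
      (hDl : Dl ∈ D.leftOpts) (h : Ge Dl (mk L (R1 ++ D :: R2) s)) :
      Step (mk L (R1 ++ D :: R2) s) (mk L (R1 ++ Dl.rightOpts ++ R2) s)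
  | congL {g g' : SGame} {L1 L2 R : List SGame} {s : ℝ} (h : Step g g') :
      Step (mk (L1 ++ g :: L2) R s) (mk (L1 ++ g' :: L2) R s)
  | congR {g g' : SGame} {L R1 R2 : List SGame} {s : ℝ} (h : Step g g') :
      Step (mk L (R1 ++ g :: R2) s) (mk L (R1 ++ g' :: R2) s)

end SGame

/-!
Adding a constant game `c` to the context shifts both optimal scores of a sum by `c`, and reading
the outcome of `G + X + c` for all `c` recovers both scores of `G + X`. Hence `G = H` forces
`G + X` and `H + X` to have the same Left-first and Right-first scores for every `X`. Write
`G ≼ H` (`ScoreLe`) when both scores of `G + X` are at most those of `H + X` for every `X`; this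
implies `G ≤ H`.

If `G ≼ H` and no Right option of `A ∈ Gᴸ` is `≼ H`, then `A ≼ B` for some `B ∈ Hᴸ`: otherwise
contexts separating `A` from each such `B`, and each `Aᴿ` from `H`, assemble into one context `X`
in which Left wins `G + X` by moving to `A + X` but loses `H + X`. For canonical `G = H` this gives
`A ≼ B ≼ A'` with `A' ∈ Gᴸ`, so `A' = A` since `G` has no dominated options; induction then
matches the options of `G` and `H` pairwise.
-/

theorem eq_and_eq_of_forall_bounds_iff {α : Type*} [LinearOrder α] [DenselyOrdered α]
    {a b a' b' : α}
    (hge : ∀ t, t ≤ a ∧ t ≤ b ↔ t ≤ a' ∧ t ≤ b')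
    (hle : ∀ t, a ≤ t ∧ b ≤ t ↔ a' ≤ t ∧ b' ≤ t)
    (hbtw : ∀ t, a < t ∧ t < b ↔ a' < t ∧ t < b') : a = a' ∧ b = b' := by
  have hmin : min a b = min a' b' :=
    eq_of_forall_le_iff fun t => by simpa only [le_min_iff] using hge t
  have hmax : max a b = max a' b' :=
    eq_of_forall_ge_iff fun t => by simpa only [max_le_iff] using hle t
  have hlt : a < b ↔ a' < b' := by
    constructor <;> intro h <;> obtain ⟨t, ht⟩ := exists_between h
    · exact ((hbtw t).1 ht).1.trans ((hbtw t).1 ht).2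
    · exact ((hbtw t).2 ht).1.trans ((hbtw t).2 ht).2
  rcases lt_or_ge a b with h | h
  · have h' := hlt.1 h
    rw [min_eq_left h.le, min_eq_left h'.le] at hmin
    rw [max_eq_right h.le, max_eq_right h'.le] at hmax
    exact ⟨hmin, hmax⟩
  · have h' : b' ≤ a' := not_lt.1 (mt hlt.2 h.not_gt)
    rw [min_eq_right h, min_eq_right h'] at hmin
    rw [max_eq_left h, max_eq_left h'] at hmax
    exact ⟨hmax, hmin⟩

namespace SGame

@[simp] lemma leftOpts_mk (L R : List SGame) (s : ℝ) : (mk L R s).leftOpts = L := rfl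
@[simp] lemma rightOpts_mk (L R : List SGame) (s : ℝ) : (mk L R s).rightOpts = R := rfl
@[simp] lemma score_mk (L R : List SGame) (s : ℝ) : (mk L R s).score = s := rfl

lemma maxRight_le_iff {g : SGame} {l : List SGame} {v : ℝ} :
    maxRight g l ≤ v ↔ ∀ o ∈ g :: l, o.rightScore ≤ v := by
  induction l generalizing g <;> simp [maxRight, *]

lemma maxRight_lt_iff {g : SGame} {l : List SGame} {v : ℝ} :
    maxRight g l < v ↔ ∀ o ∈ g :: l, o.rightScore < v := by
  induction l generalizing g <;> simp [maxRight, *]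

lemma le_minLeft_iff {g : SGame} {l : List SGame} {v : ℝ} :
    v ≤ minLeft g l ↔ ∀ o ∈ g :: l, v ≤ o.leftScore := by
  induction l generalizing g <;> simp [minLeft, *]

lemma lt_minLeft_iff {g : SGame} {l : List SGame} {v : ℝ} :
    v < minLeft g l ↔ ∀ o ∈ g :: l, v < o.leftScore := by
  induction l generalizing g <;> simp [minLeft, *]

lemma maxRight_eq_add_of_forall₂ {c : ℝ} {g g' : SGame} {l l' : List SGame}
    (h : List.Forall₂ (fun o' o => o'.rightScore = o.rightScore + c) (g' :: l') (g :: l)) :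
    maxRight g' l' = maxRight g l + c := by
  induction l generalizing g g' l' with
  | nil => cases h with | cons hg h => cases h; simp [maxRight, hg]
  | cons a t ih =>
    cases h with | cons hg h =>
    cases h with | cons ha h =>
    simp [maxRight, hg, ih (.cons ha h), max_add_add_right]

lemma minLeft_eq_add_of_forall₂ {c : ℝ} {g g' : SGame} {l l' : List SGame}
    (h : List.Forall₂ (fun o' o => o'.leftScore = o.leftScore + c) (g' :: l') (g :: l)) :
    minLeft g' l' = minLeft g l + c := by
  induction l generalizing g g' l' with
  | nil => cases h with | cons hg h => cases h; simp [minLeft, hg]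
  | cons a t ih =>
    cases h with | cons hg h =>
    cases h with | cons ha h =>
    simp [minLeft, hg, ih (.cons ha h), min_add_add_right]

lemma leftScore_of_leftOpts_eq_nil {G : SGame} (h : G.leftOpts = []) :
    G.leftScore = G.score := by
  obtain ⟨_ | _, R, s⟩ := G
  · simp [leftScore, score]
  · simp at h

lemma rightScore_of_rightOpts_eq_nil {G : SGame} (h : G.rightOpts = []) :
    G.rightScore = G.score := by
  obtain ⟨L, _ | _, s⟩ := G
  · simp [rightScore, score]
  · simp at h

lemma rightScore_le_leftScore_of_mem_leftOpts {G o : SGame} (ho : o ∈ G.leftOpts) :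
    o.rightScore ≤ G.leftScore := by
  obtain ⟨_ | ⟨g, l⟩, R, s⟩ := G
  · simp at ho
  · simpa [leftScore] using maxRight_le_iff.1 le_rfl o ho

lemma rightScore_le_leftScore_of_mem_rightOpts {G o : SGame} (ho : o ∈ G.rightOpts) :
    G.rightScore ≤ o.leftScore := by
  obtain ⟨L, _ | ⟨g, l⟩, s⟩ := G
  · simp at ho
  · simpa [rightScore] using le_minLeft_iff.1 le_rfl o ho

lemma leftScore_lt_of_forall_lt {G : SGame} {v : ℝ} (hs : G.leftOpts = [] → G.score < v)
    (h : ∀ o ∈ G.leftOpts, o.rightScore < v) : G.leftScore < v := by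
  obtain ⟨_ | ⟨g, l⟩, R, s⟩ := G
  · simpa [leftScore] using hs
  · simpa [leftScore] using maxRight_lt_iff.2 h

lemma lt_rightScore_of_forall_lt {G : SGame} {v : ℝ} (hs : G.rightOpts = [] → v < G.score)
    (h : ∀ o ∈ G.rightOpts, v < o.leftScore) : v < G.rightScore := by
  obtain ⟨L, _ | ⟨g, l⟩, s⟩ := G
  · simpa [rightScore] using hs
  · simpa [rightScore] using lt_minLeft_iff.2 h

lemma leftScore_eq_add_of_forall₂ {G G' : SGame} {c : ℝ} (hs : G'.score = G.score + c)
    (h : List.Forall₂ (fun o' o => o'.rightScore = o.rightScore + c) G'.leftOpts G.leftOpts) :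
    G'.leftScore = G.leftScore + c := by
  obtain ⟨L', R', s'⟩ := G'
  obtain ⟨L, R, s⟩ := G
  cases h with
  | nil => simpa [leftScore, score] using hs
  | cons hg h => simpa [leftScore] using maxRight_eq_add_of_forall₂ (.cons hg h)

lemma rightScore_eq_add_of_forall₂ {G G' : SGame} {c : ℝ} (hs : G'.score = G.score + c)
    (h : List.Forall₂ (fun o' o => o'.leftScore = o.leftScore + c) G'.rightOpts G.rightOpts) :
    G'.rightScore = G.rightScore + c := by
  obtain ⟨L', R', s'⟩ := G'
  obtain ⟨L, R, s⟩ := G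
  cases h with
  | nil => simpa [rightScore, score] using hs
  | cons hg h => simpa [rightScore] using minLeft_eq_add_of_forall₂ (.cons hg h)

lemma leftOpts_sum (G X : SGame) :
    (G.sum X).leftOpts = G.leftOpts.map (·.sum X) ++ X.leftOpts.map G.sum := by
  obtain ⟨L, R, s⟩ := G
  obtain ⟨L', R', s'⟩ := X
  rw [sum]
  simp

lemma rightOpts_sum (G X : SGame) :
    (G.sum X).rightOpts = G.rightOpts.map (·.sum X) ++ X.rightOpts.map G.sum := by
  obtain ⟨L, R, s⟩ := G
  obtain ⟨L', R', s'⟩ := X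
  rw [sum]
  simp

lemma score_sum (G X : SGame) : (G.sum X).score = G.score + X.score := by
  obtain ⟨L, R, s⟩ := G
  obtain ⟨L', R', s'⟩ := X
  rw [sum]
  simp [score]

lemma sum_mem_leftOpts_sum_left {G X A : SGame} (hA : A ∈ G.leftOpts) :
    A.sum X ∈ (G.sum X).leftOpts := by
  rw [leftOpts_sum]; exact List.mem_append_left _ (List.mem_map_of_mem hA)

lemma sum_mem_leftOpts_sum_right {G X x : SGame} (hx : x ∈ X.leftOpts) :
    G.sum x ∈ (G.sum X).leftOpts := by
  rw [leftOpts_sum]; exact List.mem_append_right _ (List.mem_map_of_mem hx)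

lemma sum_mem_rightOpts_sum_left {G X D : SGame} (hD : D ∈ G.rightOpts) :
    D.sum X ∈ (G.sum X).rightOpts := by
  rw [rightOpts_sum]; exact List.mem_append_left _ (List.mem_map_of_mem hD)

lemma sum_mem_rightOpts_sum_right {G X x : SGame} (hx : x ∈ X.rightOpts) :
    G.sum x ∈ (G.sum X).rightOpts := by
  rw [rightOpts_sum]; exact List.mem_append_right _ (List.mem_map_of_mem hx)

lemma sizeOf_lt_of_mem_leftOpts {G A : SGame} (h : A ∈ G.leftOpts) : sizeOf A < sizeOf G := by
  obtain ⟨L, R, s⟩ := G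
  have := List.sizeOf_lt_of_mem (show A ∈ L from h)
  simp only [mk.sizeOf_spec]
  omega

lemma sizeOf_lt_of_mem_rightOpts {G A : SGame} (h : A ∈ G.rightOpts) : sizeOf A < sizeOf G := by
  obtain ⟨L, R, s⟩ := G
  have := List.sizeOf_lt_of_mem (show A ∈ R from h)
  simp only [mk.sizeOf_spec]
  omega

def const (c : ℝ) : SGame := mk [] [] c

@[simp] lemma leftOpts_const (c : ℝ) : (const c).leftOpts = [] := rfl
@[simp] lemma rightOpts_const (c : ℝ) : (const c).rightOpts = [] := rfl
@[simp] lemma score_const (c : ℝ) : (const c).score = c := rfl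

theorem scores_sum_sum_const (G X : SGame) (c : ℝ) :
    (G.sum (X.sum (const c))).leftScore = (G.sum X).leftScore + c ∧
      (G.sum (X.sum (const c))).rightScore = (G.sum X).rightScore + c := by
  have hs : (G.sum (X.sum (const c))).score = (G.sum X).score + c := by
    simp only [score_sum, score_const]; ring
  constructor
  · refine leftScore_eq_add_of_forall₂ hs ?_
    simp only [leftOpts_sum, leftOpts_const, List.map_nil, List.append_nil, List.map_map]
    refine List.rel_append ?_ ?_ <;>
      simp only [List.forall₂_map_left_iff, List.forall₂_map_right_iff, List.forall₂_same,
        Function.comp_apply]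
    · exact fun A hA => (scores_sum_sum_const A X c).2
    · exact fun x hx => (scores_sum_sum_const G x c).2
  · refine rightScore_eq_add_of_forall₂ hs ?_
    simp only [rightOpts_sum, rightOpts_const, List.map_nil, List.append_nil, List.map_map]
    refine List.rel_append ?_ ?_ <;>
      simp only [List.forall₂_map_left_iff, List.forall₂_map_right_iff, List.forall₂_same,
        Function.comp_apply]
    · exact fun A hA => (scores_sum_sum_const A X c).1
    · exact fun x hx => (scores_sum_sum_const G x c).1
termination_by sizeOf G + sizeOf X
decreasing_by
  all_goals
    first
    | have := sizeOf_lt_of_mem_leftOpts ‹_›; omega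
    | have := sizeOf_lt_of_mem_rightOpts ‹_›; omega

lemma leftScore_sum_sum_const (G X : SGame) (c : ℝ) :
    (G.sum (X.sum (const c))).leftScore = (G.sum X).leftScore + c :=
  (scores_sum_sum_const G X c).1

lemma rightScore_sum_sum_const (G X : SGame) (c : ℝ) :
    (G.sum (X.sum (const c))).rightScore = (G.sum X).rightScore + c :=
  (scores_sum_sum_const G X c).2

lemma outcome_eq_L_or_T_iff (G : SGame) :
    G.outcome = .L ∨ G.outcome = .T ↔ 0 ≤ G.leftScore ∧ 0 ≤ G.rightScore := by
  unfold outcome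
  split_ifs <;> grind

lemma outcome_eq_R_or_T_iff (G : SGame) :
    G.outcome = .R ∨ G.outcome = .T ↔ G.leftScore ≤ 0 ∧ G.rightScore ≤ 0 := by
  unfold outcome
  split_ifs <;> grind

lemma outcome_eq_P_iff (G : SGame) :
    G.outcome = .P ↔ G.leftScore < 0 ∧ 0 < G.rightScore := by
  unfold outcome
  split_ifs <;> grind

theorem scores_sum_eq_of_gameEq {G H : SGame} (h : gameEq G H) (X : SGame) :
    (G.sum X).leftScore = (H.sum X).leftScore ∧ (G.sum X).rightScore = (H.sum X).rightScore := by
  have hl (K : SGame) (t : ℝ) :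
      (K.sum (X.sum (const (-t)))).leftScore = (K.sum X).leftScore - t := by
    rw [leftScore_sum_sum_const, sub_eq_add_neg]
  have hr (K : SGame) (t : ℝ) :
      (K.sum (X.sum (const (-t)))).rightScore = (K.sum X).rightScore - t := by
    rw [rightScore_sum_sum_const, sub_eq_add_neg]
  refine eq_and_eq_of_forall_bounds_iff (fun t => ?_) (fun t => ?_) (fun t => ?_)
  · have := outcome_eq_L_or_T_iff (G.sum (X.sum (const (-t))))
    rw [h, outcome_eq_L_or_T_iff, hl, hr, hl, hr] at this
    simpa only [sub_nonneg] using this.symm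
  · have := outcome_eq_R_or_T_iff (G.sum (X.sum (const (-t))))
    rw [h, outcome_eq_R_or_T_iff, hl, hr, hl, hr] at this
    simpa only [sub_nonpos] using this.symm
  · have := outcome_eq_P_iff (G.sum (X.sum (const (-t))))
    rw [h, outcome_eq_P_iff, hl, hr, hl, hr] at this
    simpa only [sub_neg, sub_pos] using this.symm

def ScoreLe (G H : SGame) : Prop :=
  ∀ X : SGame, (G.sum X).leftScore ≤ (H.sum X).leftScore ∧
    (G.sum X).rightScore ≤ (H.sum X).rightScore

lemma ScoreLe.trans {G H K : SGame} (h₁ : ScoreLe G H) (h₂ : ScoreLe H K) : ScoreLe G K :=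
  fun X => ⟨(h₁ X).1.trans (h₂ X).1, (h₁ X).2.trans (h₂ X).2⟩

lemma ge_of_scoreLe {G H : SGame} (h : ScoreLe H G) : Ge G H := fun X =>
  ⟨fun h' => h'.trans (h X).1, fun h' => h'.trans (h X).2,
    fun h' => h'.trans_le (h X).1, fun h' => h'.trans_le (h X).2⟩

lemma le_of_scoreLe {G H : SGame} (h : ScoreLe G H) : Le G H := fun X =>
  ⟨fun h' => (h X).1.trans h', fun h' => (h X).2.trans h',
    fun h' => (h X).1.trans_lt h', fun h' => (h X).2.trans_lt h'⟩

lemma scoreLe_of_gameEq {G H : SGame} (h : gameEq G H) : ScoreLe G H := fun X =>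
  ⟨(scores_sum_eq_of_gameEq h X).1.le, (scores_sum_eq_of_gameEq h X).2.le⟩

theorem exists_sep_of_not_scoreLe {G H : SGame} (h : ¬ ScoreLe G H) :
    ∃ X, ((H.sum X).leftScore < 0 ∧ 0 < (G.sum X).leftScore) ∨
      ((H.sum X).rightScore < 0 ∧ 0 < (G.sum X).rightScore) := by
  simp only [ScoreLe, not_forall, not_and_or, not_le] at h
  obtain ⟨X, hX | hX⟩ := h
  · refine ⟨X.sum (const (-((G.sum X).leftScore + (H.sum X).leftScore) / 2)), .inl ?_⟩
    rw [leftScore_sum_sum_const, leftScore_sum_sum_const]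
    constructor <;> linarith
  · refine ⟨X.sum (const (-((G.sum X).rightScore + (H.sum X).rightScore) / 2)), .inr ?_⟩
    rw [rightScore_sum_sum_const, rightScore_sum_sum_const]
    constructor <;> linarith

theorem exists_leftScore_sep_of_not_scoreLe {G H : SGame} (h : ¬ ScoreLe G H) :
    ∃ X, (H.sum X).leftScore < 0 ∧ 0 < (G.sum X).leftScore := by
  obtain ⟨Z, hZ | ⟨hHZ, hGZ⟩⟩ := exists_sep_of_not_scoreLe h
  · exact ⟨Z, hZ⟩
  -- `zero.sum (const c)` is the constant `c`, written so that `leftScore_sum_sum_const` applies.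
  let X := mk [Z] (H.leftOpts.map fun B => zero.sum (const (-(B.sum zero).leftScore - 1))) 0
  refine ⟨X, leftScore_lt_of_forall_lt (by simp [leftOpts_sum, X]) ?_,
    hGZ.trans_le (rightScore_le_leftScore_of_mem_leftOpts
      (sum_mem_leftOpts_sum_right (by simp [X])))⟩
  simp only [leftOpts_sum, X, leftOpts_mk, List.mem_append, List.mem_map, List.mem_singleton]
  rintro _ (⟨B, hB, rfl⟩ | ⟨_, rfl, rfl⟩)
  · calc (B.sum X).rightScore
        ≤ (B.sum (zero.sum (const (-(B.sum zero).leftScore - 1)))).leftScore :=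
          rightScore_le_leftScore_of_mem_rightOpts
            (sum_mem_rightOpts_sum_right (List.mem_map_of_mem hB))
      _ < 0 := by rw [leftScore_sum_sum_const]; linarith
  · exact hHZ

theorem exists_rightScore_sep_of_not_scoreLe {G H : SGame} (h : ¬ ScoreLe G H) :
    ∃ X, (H.sum X).rightScore < 0 ∧ 0 < (G.sum X).rightScore := by
  obtain ⟨W, ⟨hHW, hGW⟩ | hW⟩ := exists_sep_of_not_scoreLe h
  swap
  · exact ⟨W, hW⟩
  let X := mk (G.rightOpts.map fun D => zero.sum (const (1 - (D.sum zero).rightScore))) [W] 0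
  refine ⟨X, (rightScore_le_leftScore_of_mem_rightOpts
    (sum_mem_rightOpts_sum_right (by simp [X]))).trans_lt hHW,
    lt_rightScore_of_forall_lt (by simp [rightOpts_sum, X]) ?_⟩
  simp only [rightOpts_sum, X, rightOpts_mk, List.mem_append, List.mem_map, List.mem_singleton]
  rintro _ (⟨D, hD, rfl⟩ | ⟨_, rfl, rfl⟩)
  · calc 0 < (D.sum (zero.sum (const (1 - (D.sum zero).rightScore)))).rightScore := by
          rw [rightScore_sum_sum_const]; linarith
      _ ≤ (D.sum X).leftScore :=
          rightScore_le_leftScore_of_mem_leftOpts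
            (sum_mem_leftOpts_sum_right (List.mem_map_of_mem hD))
  · exact hGW

theorem exists_scoreLe_of_mem_leftOpts {G H A : SGame} (hGH : ScoreLe G H)
    (hA : A ∈ G.leftOpts) (hrev : ∀ Ar ∈ A.rightOpts, ¬ ScoreLe Ar H) :
    ∃ B ∈ H.leftOpts, ScoreLe A B := by
  by_contra! hdom
  choose x hxB hxA using fun B hB => exists_leftScore_sep_of_not_scoreLe (hdom B hB)
  choose w hwH hwAr using fun Ar hAr => exists_rightScore_sep_of_not_scoreLe (hrev Ar hAr)
  let X := mk (A.rightOpts.pmap w fun _ => id)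
    (zero.sum (const (1 - (A.sum zero).leftScore)) :: H.leftOpts.pmap x fun _ => id)
    (-H.score - 1)
  have hAX : 0 < (A.sum X).rightScore := by
    refine lt_rightScore_of_forall_lt (by simp [rightOpts_sum, X]) ?_
    simp only [rightOpts_sum, X, rightOpts_mk, List.mem_append, List.mem_map, List.mem_cons,
      List.mem_pmap]
    rintro _ (⟨Ar, hAr, rfl⟩ | ⟨_, rfl | ⟨B, hB, rfl⟩, rfl⟩)
    · exact (hwAr Ar hAr).trans_le (rightScore_le_leftScore_of_mem_leftOpts
        (sum_mem_leftOpts_sum_right (List.mem_pmap_of_mem hAr)))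
    · rw [leftScore_sum_sum_const]; linarith
    · exact hxA B hB
  have hHX : (H.sum X).leftScore < 0 := by
    refine leftScore_lt_of_forall_lt (fun _ => by simp only [score_sum, X, score_mk]; linarith) ?_
    simp only [leftOpts_sum, X, leftOpts_mk, List.mem_append, List.mem_map, List.mem_pmap]
    rintro _ (⟨B, hB, rfl⟩ | ⟨_, ⟨Ar, hAr, rfl⟩, rfl⟩)
    · exact (rightScore_le_leftScore_of_mem_rightOpts (sum_mem_rightOpts_sum_right
        (List.mem_cons_of_mem _ (List.mem_pmap_of_mem hB)))).trans_lt (hxB B hB)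
    · exact hwH Ar hAr
  have hGX := (rightScore_le_leftScore_of_mem_leftOpts (sum_mem_leftOpts_sum_left hA)).trans
    (hGH X).1
  linarith

theorem exists_scoreLe_of_mem_rightOpts {G H D : SGame} (hHG : ScoreLe H G)
    (hD : D ∈ G.rightOpts) (hrev : ∀ Dl ∈ D.leftOpts, ¬ ScoreLe H Dl) :
    ∃ E ∈ H.rightOpts, ScoreLe E D := by
  by_contra! hdom
  choose y hyD hyE using fun E hE => exists_rightScore_sep_of_not_scoreLe (hdom E hE)
  choose v hvDl hvH using fun Dl hDl => exists_leftScore_sep_of_not_scoreLe (hrev Dl hDl)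
  let X := mk
    (zero.sum (const (-1 - (D.sum zero).rightScore)) :: H.rightOpts.pmap y fun _ => id)
    (D.leftOpts.pmap v fun _ => id) (-H.score + 1)
  have hDX : (D.sum X).leftScore < 0 := by
    refine leftScore_lt_of_forall_lt (by simp [leftOpts_sum, X]) ?_
    simp only [leftOpts_sum, X, leftOpts_mk, List.mem_append, List.mem_map, List.mem_cons,
      List.mem_pmap]
    rintro _ (⟨Dl, hDl, rfl⟩ | ⟨_, rfl | ⟨E, hE, rfl⟩, rfl⟩)
    · exact (rightScore_le_leftScore_of_mem_rightOpts
        (sum_mem_rightOpts_sum_right (List.mem_pmap_of_mem hDl))).trans_lt (hvDl Dl hDl)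
    · rw [rightScore_sum_sum_const]; linarith
    · exact hyD E hE
  have hHX : 0 < (H.sum X).rightScore := by
    refine lt_rightScore_of_forall_lt (fun _ => by simp only [score_sum, X, score_mk]; linarith) ?_
    simp only [rightOpts_sum, X, rightOpts_mk, List.mem_append, List.mem_map, List.mem_pmap]
    rintro _ (⟨E, hE, rfl⟩ | ⟨_, ⟨Dl, hDl, rfl⟩, rfl⟩)
    · exact (hyE E hE).trans_le (rightScore_le_leftScore_of_mem_leftOpts
        (sum_mem_leftOpts_sum_right (List.mem_cons_of_mem _ (List.mem_pmap_of_mem hE))))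
    · exact hvH Dl hDl
  have hGX := (hHG X).2.trans
    (rightScore_le_leftScore_of_mem_rightOpts (sum_mem_rightOpts_sum_left hD))
  linarith

lemma canonical_iff (G : SGame) : Canonical G ↔
    (∀ A ∈ G.leftOpts, ∀ B ∈ G.leftOpts, A ≠ B → ¬ Ge A B) ∧
    (∀ D ∈ G.rightOpts, ∀ E ∈ G.rightOpts, D ≠ E → ¬ Le D E) ∧
    (∀ A ∈ G.leftOpts, ∀ Ar ∈ A.rightOpts, ¬ Le Ar G) ∧
    (∀ D ∈ G.rightOpts, ∀ Dl ∈ D.leftOpts, ¬ Ge Dl G) ∧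
    (∀ A ∈ G.leftOpts, Canonical A) ∧ (∀ D ∈ G.rightOpts, Canonical D) := by
  obtain ⟨L, R, s⟩ := G
  rw [Canonical]
  simp

lemma equiv_iff (G H : SGame) : Equiv G H ↔
    ((G.leftOpts = [] ∨ G.rightOpts = []) → G.score = H.score) ∧
    (∀ A ∈ G.leftOpts, ∃ B ∈ H.leftOpts, Equiv A B) ∧
    (∀ B ∈ H.leftOpts, ∃ A ∈ G.leftOpts, Equiv A B) ∧
    (∀ D ∈ G.rightOpts, ∃ E ∈ H.rightOpts, Equiv D E) ∧
    (∀ E ∈ H.rightOpts, ∃ D ∈ G.rightOpts, Equiv D E) := by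
  obtain ⟨L, R, s⟩ := G
  obtain ⟨L', R', s'⟩ := H
  rw [Equiv]
  simp

lemma score_eq_of_leftOpts_eq_nil {G H : SGame} (hGH : ScoreLe G H) (hHG : ScoreLe H G)
    (hG : G.leftOpts = []) (hH : H.leftOpts = []) : G.score = H.score := by
  have h := le_antisymm (hGH zero).1 (hHG zero).1
  rwa [leftScore_of_leftOpts_eq_nil (by simp [leftOpts_sum, hG, zero]),
    leftScore_of_leftOpts_eq_nil (by simp [leftOpts_sum, hH, zero]), score_sum, score_sum,
    add_left_inj] at h

lemma score_eq_of_rightOpts_eq_nil {G H : SGame} (hGH : ScoreLe G H) (hHG : ScoreLe H G)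
    (hG : G.rightOpts = []) (hH : H.rightOpts = []) : G.score = H.score := by
  have h := le_antisymm (hGH zero).2 (hHG zero).2
  rwa [rightScore_of_rightOpts_eq_nil (by simp [rightOpts_sum, hG, zero]),
    rightScore_of_rightOpts_eq_nil (by simp [rightOpts_sum, hH, zero]), score_sum, score_sum,
    add_left_inj] at h

theorem Canonical.exists_mem_leftOpts_scoreLe_scoreLe {G H A : SGame} (hG : Canonical G)
    (hH : Canonical H) (hGH : ScoreLe G H) (hHG : ScoreLe H G) (hA : A ∈ G.leftOpts) :
    ∃ B ∈ H.leftOpts, ScoreLe A B ∧ ScoreLe B A := by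
  obtain ⟨hdom, -, hrev, -⟩ := (canonical_iff G).1 hG
  obtain ⟨-, -, hrev', -⟩ := (canonical_iff H).1 hH
  obtain ⟨B, hB, hAB⟩ := exists_scoreLe_of_mem_leftOpts hGH hA
    fun Ar hAr h => hrev A hA Ar hAr (le_of_scoreLe (h.trans hHG))
  obtain ⟨A', hA', hBA'⟩ := exists_scoreLe_of_mem_leftOpts hHG hB
    fun Br hBr h => hrev' B hB Br hBr (le_of_scoreLe (h.trans hGH))
  obtain rfl : A' = A := of_not_not fun hne => hdom A' hA' A hA hne (ge_of_scoreLe (hAB.trans hBA'))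
  exact ⟨B, hB, hAB, hBA'⟩

theorem Canonical.exists_mem_rightOpts_scoreLe_scoreLe {G H D : SGame} (hG : Canonical G)
    (hH : Canonical H) (hGH : ScoreLe G H) (hHG : ScoreLe H G) (hD : D ∈ G.rightOpts) :
    ∃ E ∈ H.rightOpts, ScoreLe D E ∧ ScoreLe E D := by
  obtain ⟨-, hdom, -, hrev, -⟩ := (canonical_iff G).1 hG
  obtain ⟨-, -, -, hrev', -⟩ := (canonical_iff H).1 hH
  obtain ⟨E, hE, hED⟩ := exists_scoreLe_of_mem_rightOpts hHG hD
    fun Dl hDl h => hrev D hD Dl hDl (ge_of_scoreLe (hGH.trans h))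
  obtain ⟨D', hD', hD'E⟩ := exists_scoreLe_of_mem_rightOpts hGH hE
    fun El hEl h => hrev' E hE El hEl (ge_of_scoreLe (hHG.trans h))
  obtain rfl : D' = D := of_not_not fun hne => hdom D' hD' D hD hne (le_of_scoreLe (hD'E.trans hED))
  exact ⟨E, hE, hD'E, hED⟩

theorem Canonical.equiv_of_scoreLe {G H : SGame} (hG : Canonical G) (hH : Canonical H)
    (hGH : ScoreLe G H) (hHG : ScoreLe H G) : Equiv G H := by
  obtain ⟨-, -, -, -, hGL, hGR⟩ := (canonical_iff G).1 hG
  obtain ⟨-, -, -, -, hHL, hHR⟩ := (canonical_iff H).1 hH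
  refine (equiv_iff G H).2 ⟨?_, fun A hA => ?_, fun B hB => ?_, fun A hA => ?_, fun B hB => ?_⟩
  · rintro (hL | hR)
    · refine score_eq_of_leftOpts_eq_nil hGH hHG hL
        (List.eq_nil_iff_forall_not_mem.2 fun B hB => ?_)
      obtain ⟨A, hA, -⟩ := hH.exists_mem_leftOpts_scoreLe_scoreLe hG hHG hGH hB
      simp [hL] at hA
    · refine score_eq_of_rightOpts_eq_nil hGH hHG hR
        (List.eq_nil_iff_forall_not_mem.2 fun B hB => ?_)
      obtain ⟨A, hA, -⟩ := hH.exists_mem_rightOpts_scoreLe_scoreLe hG hHG hGH hB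
      simp [hR] at hA
  · obtain ⟨B, hB, hAB, hBA⟩ := hG.exists_mem_leftOpts_scoreLe_scoreLe hH hGH hHG hA
    exact ⟨B, hB, (hGL A hA).equiv_of_scoreLe (hHL B hB) hAB hBA⟩
  · obtain ⟨A, hA, hBA, hAB⟩ := hH.exists_mem_leftOpts_scoreLe_scoreLe hG hHG hGH hB
    exact ⟨A, hA, (hGL A hA).equiv_of_scoreLe (hHL B hB) hAB hBA⟩
  · obtain ⟨B, hB, hAB, hBA⟩ := hG.exists_mem_rightOpts_scoreLe_scoreLe hH hGH hHG hA
    exact ⟨B, hB, (hGR A hA).equiv_of_scoreLe (hHR B hB) hAB hBA⟩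
  · obtain ⟨A, hA, hBA, hAB⟩ := hH.exists_mem_rightOpts_scoreLe_scoreLe hG hHG hGH hB
    exact ⟨A, hA, (hGR A hA).equiv_of_scoreLe (hHR B hB) hAB hBA⟩
termination_by sizeOf G + sizeOf H
decreasing_by
  all_goals
    first
    | have := sizeOf_lt_of_mem_leftOpts hA; have := sizeOf_lt_of_mem_leftOpts hB; omega
    | have := sizeOf_lt_of_mem_rightOpts hA; have := sizeOf_lt_of_mem_rightOpts hB; omega

end SGame

/-- Equal games in canonical form (no dominated or reversible options) are
equivalent: identical underlying game trees with the same scores at all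
termination vertices. -/
theorem canonical_unique_up_to_equiv (G H : SGame) (h : SGame.gameEq G H)
    (hG : SGame.Canonical G) (hH : SGame.Canonical H) : SGame.Equiv G H :=
  hG.equiv_of_scoreLe hH (SGame.scoreLe_of_gameEq h) (SGame.scoreLe_of_gameEq fun X => (h X).symm)
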